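/- For measurable A ⊆ ℝ^d and δ₁, δ₂, ε₁, ε₂ > 0, one has Z_{δ₁}(ε₁) Z_{δ₂}(ε₂) A ⊆ Z_{δ₁+δ₂}(ε₁ε₂ · δ₁^d δ₂^d / ((δ₁+δ₂)^d · min(δ₁,δ₂)^d)) A. -/

import Mathlib

/-! Double counting: with `S = Q(x, δ₁) ∩ Z_{δ₂}(ε₂) A`, Tonelli gives
`∫_S |Q(y, δ₂) ∩ A| dy = ∫_A |S ∩ Q(z, δ₂)| dz`. For `x ∈ Z_{δ₁}(ε₁) Z_{δ₂}(ε₂) A` the left side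
exceeds `ε₁ δ₁^d · ε₂ δ₂^d`, while the integrand on the right is at most
`|Q(x, δ₁) ∩ Q(z, δ₂)| ≤ min(δ₁, δ₂)^d` and vanishes unless `z ∈ Q(x, δ₁ + δ₂)`. -/

open MeasureTheory

noncomputable section

/-- Open axis-parallel cube of side length r centered at x in ℝ^d. -/
def cube (d : ℕ) (x : EuclideanSpace ℝ (Fin d)) (r : ℝ) :
    Set (EuclideanSpace ℝ (Fin d)) :=
  {y | ∀ i, |y i - x i| < r / 2}

/-- The zooming-out operator: Z_δ(ε)A = {x : |Q(x,δ) ∩ A| > ε·δ^d}. -/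
def Zoom (d : ℕ) (δ ε : ℝ) (A : Set (EuclideanSpace ℝ (Fin d))) :
    Set (EuclideanSpace ℝ (Fin d)) :=
  {x | ENNReal.ofReal (ε * δ ^ d) < volume (cube d x δ ∩ A)}

open Set

variable {d : ℕ}

lemma mem_cube_iff_sub_mem {x y : EuclideanSpace ℝ (Fin d)} {r : ℝ} :
    y ∈ cube d x r ↔ y - x ∈ cube d 0 r := by
  simp [cube]

lemma mem_cube_comm {x y : EuclideanSpace ℝ (Fin d)} {r : ℝ} :
    y ∈ cube d x r ↔ x ∈ cube d y r :=
  forall_congr' fun _ => by rw [abs_sub_comm]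

lemma cube_eq_preimage_pi (x : EuclideanSpace ℝ (Fin d)) (r : ℝ) :
    cube d x r = (MeasurableEquiv.toLp 2 (Fin d → ℝ)).symm ⁻¹'
      univ.pi fun i => Ioo (x i - r / 2) (x i + r / 2) := by
  ext y
  simp only [cube, mem_ofPred_eq, mem_preimage, MeasurableEquiv.coe_toLp_symm, mem_univ_pi,
    mem_Ioo, abs_sub_lt_iff]
  exact forall_congr' fun i => by constructor <;> rintro ⟨h₁, h₂⟩ <;> constructor <;> linarith

lemma measurableSet_cube (x : EuclideanSpace ℝ (Fin d)) (r : ℝ) : MeasurableSet (cube d x r) := by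
  rw [cube_eq_preimage_pi]
  exact MeasurableEquiv.measurable _ (.univ_pi fun _ => measurableSet_Ioo)

lemma measurableSet_setOf_mem_cube (r : ℝ) :
    MeasurableSet {p : EuclideanSpace ℝ (Fin d) × EuclideanSpace ℝ (Fin d) |
      p.2 ∈ cube d p.1 r} := by
  have : {p : EuclideanSpace ℝ (Fin d) × EuclideanSpace ℝ (Fin d) | p.2 ∈ cube d p.1 r} =
      (fun p => p.2 - p.1) ⁻¹' cube d 0 r :=
    ext fun _ => mem_cube_iff_sub_mem
  rw [this]
  exact (measurable_snd.sub measurable_fst) (measurableSet_cube 0 r)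

lemma measurable_volume_cube_inter {A : Set (EuclideanSpace ℝ (Fin d))} (hA : MeasurableSet A)
    (r : ℝ) : Measurable fun y => volume (cube d y r ∩ A) :=
  measurable_measure_prodMk_left ((measurableSet_setOf_mem_cube r).inter (measurable_snd hA))

lemma measurableSet_zoom {A : Set (EuclideanSpace ℝ (Fin d))} (hA : MeasurableSet A) (δ ε : ℝ) :
    MeasurableSet (Zoom d δ ε A) :=
  measurableSet_lt measurable_const (measurable_volume_cube_inter hA δ)

lemma zoom_toMeasurable (δ ε : ℝ) (A : Set (EuclideanSpace ℝ (Fin d))) :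
    Zoom d δ ε (toMeasurable volume A) = Zoom d δ ε A := by
  ext x
  simp only [Zoom, mem_ofPred_eq, inter_comm (cube d x δ),
    Measure.measure_toMeasurable_inter_of_sFinite (measurableSet_cube x δ)]

lemma volume_cube_inter_cube_le (x z : EuclideanSpace ℝ (Fin d)) (r₁ r₂ : ℝ) :
    volume (cube d x r₁ ∩ cube d z r₂) ≤ ENNReal.ofReal (min r₁ r₂) ^ d := by
  rw [cube_eq_preimage_pi, cube_eq_preimage_pi, ← preimage_inter, ← pi_inter_distrib,
    (EuclideanSpace.volume_preserving_symm_measurableEquiv_toLp (Fin d)).measure_preimage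
      (MeasurableSet.univ_pi fun _ => measurableSet_Ioo.inter measurableSet_Ioo).nullMeasurableSet,
    volume_pi_pi]
  calc ∏ i, volume (Ioo (x i - r₁ / 2) (x i + r₁ / 2) ∩ Ioo (z i - r₂ / 2) (z i + r₂ / 2))
      ≤ ∏ _i : Fin d, ENNReal.ofReal (min r₁ r₂) := by
        refine Finset.prod_le_prod' fun i _ => ?_
        rw [Ioo_inter_Ioo, Real.volume_Ioo]
        refine ENNReal.ofReal_le_ofReal (le_min ?_ ?_)
        · linarith [le_max_left (x i - r₁ / 2) (z i - r₂ / 2),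
            min_le_left (x i + r₁ / 2) (z i + r₂ / 2)]
        · linarith [le_max_right (x i - r₁ / 2) (z i - r₂ / 2),
            min_le_right (x i + r₁ / 2) (z i + r₂ / 2)]
    _ = ENNReal.ofReal (min r₁ r₂) ^ d := by simp

lemma cube_inter_cube_eq_empty {x z : EuclideanSpace ℝ (Fin d)} {r₁ r₂ : ℝ}
    (hz : z ∉ cube d x (r₁ + r₂)) : cube d x r₁ ∩ cube d z r₂ = ∅ := by
  refine eq_empty_of_forall_notMem fun y ⟨hy₁, hy₂⟩ => hz fun i => ?_
  have hzy := mem_cube_comm.1 hy₂ i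
  calc |z i - x i| ≤ |z i - y i| + |y i - x i| := abs_sub_le _ _ _
    _ < (r₁ + r₂) / 2 := by linarith [hy₁ i]

lemma volume_cube_inter_cube_le_indicator (x z : EuclideanSpace ℝ (Fin d)) (r₁ r₂ : ℝ) :
    volume (cube d x r₁ ∩ cube d z r₂) ≤
      (cube d x (r₁ + r₂)).indicator (fun _ => ENNReal.ofReal (min r₁ r₂) ^ d) z := by
  by_cases hz : z ∈ cube d x (r₁ + r₂)
  · rw [indicator_of_mem hz]
    exact volume_cube_inter_cube_le x z r₁ r₂
  · rw [indicator_of_notMem hz, cube_inter_cube_eq_empty hz, measure_empty]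

lemma setLIntegral_volume_cube_inter_comm {S A : Set (EuclideanSpace ℝ (Fin d))}
    (hS : MeasurableSet S) (hA : MeasurableSet A) (r : ℝ) :
    ∫⁻ y in S, volume (cube d y r ∩ A) = ∫⁻ z in A, volume (S ∩ cube d z r) := by
  set T := {p : EuclideanSpace ℝ (Fin d) × EuclideanSpace ℝ (Fin d) |
    p.1 ∈ S ∧ p.2 ∈ cube d p.1 r ∧ p.2 ∈ A}
  have hT : MeasurableSet T :=
    (measurable_fst hS).inter ((measurableSet_setOf_mem_cube r).inter (measurable_snd hA))
  calc ∫⁻ y in S, volume (cube d y r ∩ A) = volume.prod volume T := by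
        rw [Measure.prod_apply hT, ← lintegral_indicator hS]
        refine lintegral_congr fun y => ?_
        by_cases hy : y ∈ S <;> simp [T, hy, indicator, ofPred_and]
    _ = ∫⁻ z in A, volume (S ∩ cube d z r) := by
        rw [Measure.prod_apply_symm hT, ← lintegral_indicator hA]
        refine lintegral_congr fun z => ?_
        by_cases hz : z ∈ A <;> simp [T, hz, indicator, ofPred_and, mem_cube_comm (y := z)]

lemma ofReal_mul_ofReal_lt_of_mem_zoom_zoom {A : Set (EuclideanSpace ℝ (Fin d))}
    (hA : MeasurableSet A) {δ₁ δ₂ ε₁ ε₂ : ℝ} (hε₂δ₂ : 0 < ε₂ * δ₂ ^ d)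
    {x : EuclideanSpace ℝ (Fin d)} (hx : x ∈ Zoom d δ₁ ε₁ (Zoom d δ₂ ε₂ A)) :
    ENNReal.ofReal (ε₁ * δ₁ ^ d) * ENNReal.ofReal (ε₂ * δ₂ ^ d) <
      ENNReal.ofReal (min δ₁ δ₂) ^ d * volume (cube d x (δ₁ + δ₂) ∩ A) := by
  set S := cube d x δ₁ ∩ Zoom d δ₂ ε₂ A
  have hS : MeasurableSet S := (measurableSet_cube x δ₁).inter (measurableSet_zoom hA δ₂ ε₂)
  have hc : ENNReal.ofReal (ε₂ * δ₂ ^ d) ≠ 0 := (ENNReal.ofReal_pos.2 hε₂δ₂).ne'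
  calc ENNReal.ofReal (ε₁ * δ₁ ^ d) * ENNReal.ofReal (ε₂ * δ₂ ^ d)
      < volume S * ENNReal.ofReal (ε₂ * δ₂ ^ d) :=
        ENNReal.mul_lt_mul_left hc ENNReal.ofReal_ne_top hx
    _ = ∫⁻ _ in S, ENNReal.ofReal (ε₂ * δ₂ ^ d) := by rw [setLIntegral_const, mul_comm]
    _ ≤ ∫⁻ y in S, volume (cube d y δ₂ ∩ A) :=
        setLIntegral_mono (measurable_volume_cube_inter hA δ₂) fun _ hy => hy.2.le
    _ = ∫⁻ z in A, volume (S ∩ cube d z δ₂) := setLIntegral_volume_cube_inter_comm hS hA δ₂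
    _ ≤ ∫⁻ z in A, (cube d x (δ₁ + δ₂)).indicator (fun _ => ENNReal.ofReal (min δ₁ δ₂) ^ d) z :=
        lintegral_mono fun z => (measure_mono (inter_subset_inter_left _ inter_subset_left)).trans
          (volume_cube_inter_cube_le_indicator x z δ₁ δ₂)
    _ = _ := by
        rw [lintegral_indicator_const (measurableSet_cube x _),
          Measure.restrict_apply (measurableSet_cube x _)]

theorem stmt7_general (d : ℕ) (A : Set (EuclideanSpace ℝ (Fin d)))
    (δ₁ δ₂ ε₁ ε₂ : ℝ) (hδ₁ : 0 < δ₁) (hδ₂ : 0 < δ₂) (hε₂ : 0 < ε₂) :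
    Zoom d δ₁ ε₁ (Zoom d δ₂ ε₂ A) ⊆
      Zoom d (δ₁ + δ₂)
        (ε₁ * ε₂ * (δ₁ ^ d * δ₂ ^ d) / ((δ₁ + δ₂) ^ d * (min δ₁ δ₂) ^ d)) A := by
  rw [← zoom_toMeasurable δ₂ ε₂ A, ← zoom_toMeasurable (δ₁ + δ₂) _ A]
  intro x hx
  have hmin : 0 < min δ₁ δ₂ := lt_min hδ₁ hδ₂
  have key := ofReal_mul_ofReal_lt_of_mem_zoom_zoom (measurableSet_toMeasurable volume A)
    (by positivity) hx
  have hscale : ε₁ * ε₂ * (δ₁ ^ d * δ₂ ^ d) / ((δ₁ + δ₂) ^ d * min δ₁ δ₂ ^ d) * (δ₁ + δ₂) ^ d =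
      ε₁ * δ₁ ^ d * (ε₂ * δ₂ ^ d) / min δ₁ δ₂ ^ d := by
    field_simp
  change ENNReal.ofReal (_ * (δ₁ + δ₂) ^ d) < _
  rw [hscale, ENNReal.ofReal_div_of_pos (by positivity), ENNReal.ofReal_mul' (by positivity),
    ENNReal.ofReal_pow hmin.le, ENNReal.div_lt_iff (.inl (by positivity)) (.inl (by simp)),
    mul_comm (volume _)]
  exact key

/-- Z_{δ₁}(ε₁) Z_{δ₂}(ε₂) A ⊆
Z_{δ₁+δ₂}(ε₁ε₂ δ₁^d δ₂^d / ((δ₁+δ₂)^d (min δ₁ δ₂)^d)) A. -/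
theorem stmt7 (d : ℕ) (A : Set (EuclideanSpace ℝ (Fin d)))
    (δ₁ δ₂ ε₁ ε₂ : ℝ) (hδ₁ : 0 < δ₁) (hδ₂ : 0 < δ₂) (hε₁ : 0 < ε₁) (hε₂ : 0 < ε₂) :
    Zoom d δ₁ ε₁ (Zoom d δ₂ ε₂ A) ⊆
      Zoom d (δ₁ + δ₂)
        (ε₁ * ε₂ * (δ₁ ^ d * δ₂ ^ d) / ((δ₁ + δ₂) ^ d * (min δ₁ δ₂) ^ d)) A :=
  stmt7_general d A δ₁ δ₂ ε₁ ε₂ hδ₁ hδ₂ hε₂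

end
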